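/- Let M be a perfect matching in the bipartite graph H constructed from a directed graph G with source s and sink t (vertices v_in for v ≠ s, v_out for v ≠ t; edges (u_out, v_in) for each directed edge (u,v) of G with v ≠ s, u ≠ t; edges (v_in, v_out) for v ≠ s,t). Define S = {(u,v) : (u_out, v_in) ∈ M, u ≠ v}. Then the directed graph (V, S) has every vertex with in-degree and out-degree at most 1, s has out-degree 1 and in-degree 0, t has in-degree 1 and out-degree 0, and for every v ≠ s,t, in-degree 1 implies out-degree 1; consequently S contains a directed path from s to t. -/

import Mathlib

/-!
Since `H` is bipartite, each `v_out` is matched to some `w_in`; this gives `v` a successor `w`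
in `S` unless `w = v`, which is impossible for `v = s` and, once `v_in` is already matched to
some `u_out` with `u ≠ v`, for every other `v`. Dually `t_in` is matched to some `u_out` with
`u ≠ t`. Thus, if `t` were unreachable from `s`, successor would be an injective self-map of the
finite set of vertices reachable from `s`, hence surjective, and `s` would have a predecessor.
-/

open Function SimpleGraph

namespace Relation

theorem reflTransGen_of_injective_of_exists_succ {α : Type*} [Finite α] {r : α → α → Prop}
    {a b : α} (hinj : ∀ {x y z}, r x z → r y z → x = y) (ha : ∀ x, ¬ r x a)
    (hsucc : ∀ x, ReflTransGen r a x → x ≠ b → ∃ y, r x y) : ReflTransGen r a b := by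
  by_contra hab
  have hsucc' : ∀ x : {x // ReflTransGen r a x}, ∃ y : {x // ReflTransGen r a x}, r x y :=
    fun ⟨x, hx⟩ ↦
      have ⟨y, hxy⟩ := hsucc x hx fun h ↦ hab (h ▸ hx)
      ⟨⟨y, hx.tail hxy⟩, hxy⟩
  choose f hf using hsucc'
  have hf_inj : Injective f := fun x y hxy ↦ Subtype.ext (hinj (hf x) (hxy ▸ hf y))
  obtain ⟨x, hx⟩ := Finite.surjective_of_injective hf_inj ⟨a, .refl⟩
  exact ha x (by simpa [hx] using hf x)

end Relation

namespace SimpleGraph.Subgraph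

variable {A B : Type*} {G : SimpleGraph (A ⊕ B)} {M : G.Subgraph}

theorem IsPerfectMatching.exists_inl_partner (hM : M.IsPerfectMatching)
    (hbip : M.spanningCoe ≤ completeBipartiteGraph A B) (b : B) :
    ∃ a, M.Adj (.inr b) (.inl a) := by
  obtain ⟨p, hp, -⟩ := hM.1 (hM.2 (.inr b))
  rcases p with a | _
  · exact ⟨a, hp⟩
  · simpa using hbip hp

theorem IsPerfectMatching.exists_inr_partner (hM : M.IsPerfectMatching)
    (hbip : M.spanningCoe ≤ completeBipartiteGraph A B) (a : A) :
    ∃ b, M.Adj (.inr b) (.inl a) := by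
  obtain ⟨p, hp, -⟩ := hM.1 (hM.2 (.inl a))
  rcases p with _ | b
  · simpa using hbip hp
  · exact ⟨b, hp.symm⟩

end SimpleGraph.Subgraph

namespace SplitMatching

variable {V : Type*} {s t : V} {G : SimpleGraph ({v : V // v ≠ s} ⊕ {v : V // v ≠ t})}
  {M : G.Subgraph}

def rel (M : G.Subgraph) (u v : V) : Prop :=
  u ≠ v ∧ ∃ (hu : u ≠ t) (hv : v ≠ s), M.Adj (.inr ⟨u, hu⟩) (.inl ⟨v, hv⟩)

theorem rel_functional (hM : M.IsMatching) {u v v' : V} (hv : rel M u v) (hv' : rel M u v') :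
    v = v' := by
  obtain ⟨-, _, _, h⟩ := hv
  obtain ⟨-, _, _, h'⟩ := hv'
  simpa using hM.eq_of_adj_left h h'

theorem rel_injective (hM : M.IsMatching) {u u' v : V} (hu : rel M u v) (hu' : rel M u' v) :
    u = u' := by
  obtain ⟨-, _, _, h⟩ := hu
  obtain ⟨-, _, _, h'⟩ := hu'
  simpa using hM.eq_of_adj_right h h'

theorem not_rel_source (u : V) : ¬ rel M u s := fun ⟨_, _, hs, _⟩ ↦ hs rfl

theorem not_rel_target (w : V) : ¬ rel M t w := fun ⟨_, ht, _, _⟩ ↦ ht rfl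

theorem exists_rel_source (hM : M.IsPerfectMatching)
    (hbip : M.spanningCoe ≤ completeBipartiteGraph _ _) (hst : s ≠ t) : ∃ w, rel M s w := by
  obtain ⟨⟨w, hw⟩, h⟩ := hM.exists_inl_partner hbip ⟨s, hst⟩
  exact ⟨w, Ne.symm hw, hst, hw, h⟩

theorem exists_rel_target (hM : M.IsPerfectMatching)
    (hbip : M.spanningCoe ≤ completeBipartiteGraph _ _) (hst : s ≠ t) : ∃ u, rel M u t := by
  obtain ⟨⟨u, hu⟩, h⟩ := hM.exists_inr_partner hbip ⟨t, Ne.symm hst⟩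
  exact ⟨u, hu, hu, Ne.symm hst, h⟩

theorem exists_rel_of_rel (hM : M.IsPerfectMatching)
    (hbip : M.spanningCoe ≤ completeBipartiteGraph _ _) {u v : V}
    (hvt : v ≠ t) (huv : rel M u v) : ∃ w, rel M v w := by
  obtain ⟨⟨w, hw⟩, h⟩ := hM.exists_inl_partner hbip ⟨v, hvt⟩
  refine ⟨w, fun hvw ↦ ?_, hvt, hw, h⟩
  subst hvw
  obtain ⟨hne, _, _, h'⟩ := huv
  exact hne (by simpa using hM.1.eq_of_adj_right h' h)

end SplitMatching

theorem stmt_14 {V : Type*} [Fintype V] (E : V → V → Prop)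
    (s t : V) (hst : s ≠ t)
    (M : (SimpleGraph.fromRel
        (fun p q : ({v : V // v ≠ s} ⊕ {v : V // v ≠ t}) =>
          match p, q with
          | Sum.inr u, Sum.inl v => E u.1 v.1 ∨ u.1 = v.1
          | _, _ => False)).Subgraph)
    (hM : M.IsPerfectMatching) :
    let R : V → V → Prop := fun u v =>
      u ≠ v ∧ ∃ (hu : u ≠ t) (hv : v ≠ s), M.Adj (Sum.inr ⟨u, hu⟩) (Sum.inl ⟨v, hv⟩)
    (∀ u v v', R u v → R u v' → v = v') ∧
    (∀ u u' v, R u v → R u' v → u = u') ∧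
    (∃ w, R s w) ∧ (∀ u, ¬ R u s) ∧ (∃ u, R u t) ∧ (∀ w, ¬ R t w) ∧
    (∀ v, v ≠ s → v ≠ t → (∃ u, R u v) → ∃ w, R v w) ∧
    Relation.ReflTransGen R s t := by
  intro R
  have hbip : M.spanningCoe ≤ completeBipartiteGraph _ _ := fun p q h ↦ by
    have := M.adj_sub h
    rcases p with p | p <;> rcases q with q | q <;> simp_all [fromRel_adj, completeBipartiteGraph]
  have hmid (v : V) (hvt : v ≠ t) : (∃ u, R u v) → ∃ w, R v w :=
    fun ⟨_, huv⟩ ↦ SplitMatching.exists_rel_of_rel hM hbip hvt huv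
  refine ⟨fun _ _ _ ↦ SplitMatching.rel_functional hM.1,
    fun _ _ _ ↦ SplitMatching.rel_injective hM.1,
    SplitMatching.exists_rel_source hM hbip hst, SplitMatching.not_rel_source,
    SplitMatching.exists_rel_target hM hbip hst, SplitMatching.not_rel_target,
    fun v _ hvt ↦ hmid v hvt, ?_⟩
  refine Relation.reflTransGen_of_injective_of_exists_succ (SplitMatching.rel_injective hM.1)
    SplitMatching.not_rel_source fun x hx hxt ↦ ?_
  rcases hx.cases_tail with rfl | ⟨u, -, hux⟩
  · exact SplitMatching.exists_rel_source hM hbip hst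
  · exact hmid x hxt ⟨u, hux⟩
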